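/- arXiv:2207.04522 — 5 statements merged into one kernel-verified Lean document; each statement's English description precedes it below -/
import Mathlib

section
/- For every tetrahedral erasure channel W, both children lose inertia uniformly: A(W^s) ≤ A(W)·(1 − A(W)/3) and A(W^p) ≤ A(W)·(1 − A(W)/3). -/
/-
Write `a` for `p` (serial child) or `t` (parallel child). The differences of the child's edge
weights factor as `(a + q)(s - r)`, `(a + r)(q - s)`, `(a + s)(r - q)`, and `a + q ≤ 1 - r - s`,
so the child's inertia is at most `A - S` with `S = ∑ (r + s)(r - s)²`. The homogeneous quartic
inequality `A² ≤ 3 (q + r + s) S` together with `q + r + s ≤ 1` gives `S ≥ A² / 3`.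
-/

noncomputable section

/-- A quintuple of reals representing a candidate tetrahedral erasure channel
`W = (p, q, r, s, t)`. -/
structure TECQuint where
  p : ℝ
  q : ℝ
  r : ℝ
  s : ℝ
  t : ℝ

namespace TECQuint

/-- `W` is a tetrahedral erasure channel: all five entries are nonnegative and sum to 1. -/
def IsTEC (W : TECQuint) : Prop :=
  0 ≤ W.p ∧ 0 ≤ W.q ∧ 0 ≤ W.r ∧ 0 ≤ W.s ∧ 0 ≤ W.t ∧
    W.p + W.q + W.r + W.s + W.t = 1

/-- `W` is balanced: `q = r = s`. -/
def Balanced (W : TECQuint) : Prop := W.q = W.r ∧ W.r = W.s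

/-- The serial child `W^s`. -/
def ser (W : TECQuint) : TECQuint where
  p := W.p ^ 2
  q := W.p * W.s + W.s * W.q + W.q * W.p
  r := W.p * W.q + W.q * W.r + W.r * W.p
  s := W.p * W.r + W.r * W.s + W.s * W.p
  t := 1 - (W.p ^ 2 + (W.p * W.s + W.s * W.q + W.q * W.p)
      + (W.p * W.q + W.q * W.r + W.r * W.p)
      + (W.p * W.r + W.r * W.s + W.s * W.p))

/-- The parallel child `W^p`. -/
def par (W : TECQuint) : TECQuint where
  p := 1 - ((W.t * W.s + W.s * W.q + W.q * W.t)
      + (W.t * W.q + W.q * W.r + W.r * W.t)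
      + (W.t * W.r + W.r * W.s + W.s * W.t) + W.t ^ 2)
  q := W.t * W.s + W.s * W.q + W.q * W.t
  r := W.t * W.q + W.q * W.r + W.r * W.t
  s := W.t * W.r + W.r * W.s + W.s * W.t
  t := W.t ^ 2

/-- The moment of inertia `A(W) = (q−r)² + (r−s)² + (s−q)²`. -/
def inertia (W : TECQuint) : ℝ :=
  (W.q - W.r) ^ 2 + (W.r - W.s) ^ 2 + (W.s - W.q) ^ 2

/-- The (conditional) entropy `H(W) = (q+r+s)/2 + t`. -/
def entropy (W : TECQuint) : ℝ := (W.q + W.r + W.s) / 2 + W.t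

/-- The edge mass `E(W) = q + r + s`. -/
def edgeMass (W : TECQuint) : ℝ := W.q + W.r + W.s

/-- The Quetelet index `Q(W) = E(W) / (H(W)(1−H(W)))`. -/
def quetelet (W : TECQuint) : ℝ :=
  edgeMass W / (entropy W * (1 - entropy W))

/-- One step of the channel process: `true` picks the serial child, `false` the parallel child. -/
def child (W : TECQuint) (b : Bool) : TECQuint := if b then ser W else par W

/-- The descendant `W^c` of `W` along the string `c ∈ {s,p}^n`. -/
def descend : TECQuint → {n : ℕ} → (Fin n → Bool) → TECQuint
  | W, 0, _ => W
  | W, _ + 1, c => descend (child W (c 0)) (fun i => c i.succ)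

end TECQuint

open TECQuint

theorem sq_inertia_le_mul_weighted_inertia (q r s : ℝ) (hq : 0 ≤ q) (hr : 0 ≤ r) (hs : 0 ≤ s) :
    ((q - r) ^ 2 + (r - s) ^ 2 + (s - q) ^ 2) ^ 2 ≤
      3 * (q + r + s) * ((q + r) * (q - r) ^ 2 + (r + s) * (r - s) ^ 2 + (s + q) * (s - q) ^ 2) := by
  nlinarith [mul_nonneg hq hr, mul_nonneg hr hs, mul_nonneg hs hq]

theorem sq_mul_le_mul_of_le_one {x y d : ℝ} (hx : 0 ≤ x) (hxy : x ≤ y) (hy : y ≤ 1) (hd : 0 ≤ d) :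
    x ^ 2 * d ≤ y * d :=
  mul_le_mul_of_nonneg_right (by nlinarith) hd

namespace TECQuint

def childInertia (a : ℝ) (W : TECQuint) : ℝ :=
  (a + W.q) ^ 2 * (W.r - W.s) ^ 2 + (a + W.r) ^ 2 * (W.s - W.q) ^ 2 +
    (a + W.s) ^ 2 * (W.q - W.r) ^ 2

theorem inertia_ser (W : TECQuint) : inertia (ser W) = childInertia W.p W := by
  simp only [inertia, ser, childInertia]
  ring

theorem inertia_par (W : TECQuint) : inertia (par W) = childInertia W.t W := by
  simp only [inertia, par, childInertia]
  ring

theorem childInertia_le {a : ℝ} {W : TECQuint} (ha : 0 ≤ a) (hq : 0 ≤ W.q) (hr : 0 ≤ W.r)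
    (hs : 0 ≤ W.s) (hsum : a + W.q + W.r + W.s ≤ 1) :
    childInertia a W ≤ inertia W * (1 - inertia W / 3) := by
  set S := (W.q + W.r) * (W.q - W.r) ^ 2 + (W.r + W.s) * (W.r - W.s) ^ 2 +
    (W.s + W.q) * (W.s - W.q) ^ 2 with hS
  have hS_nonneg : 0 ≤ S := by positivity
  have hcubic : inertia W ^ 2 ≤ 3 * (W.q + W.r + W.s) * S :=
    sq_inertia_le_mul_weighted_inertia W.q W.r W.s hq hr hs
  calc childInertia a W
      ≤ (1 - (W.r + W.s)) * (W.r - W.s) ^ 2 + (1 - (W.s + W.q)) * (W.s - W.q) ^ 2 +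
          (1 - (W.q + W.r)) * (W.q - W.r) ^ 2 := by
        unfold childInertia
        gcongr ?_ + ?_ + ?_ <;>
          exact sq_mul_le_mul_of_le_one (by linarith) (by linarith) (by linarith) (sq_nonneg _)
    _ = inertia W - S := by rw [inertia, hS]; ring
    _ ≤ inertia W - inertia W ^ 2 / 3 := by nlinarith
    _ = inertia W * (1 - inertia W / 3) := by ring

end TECQuint

theorem uniform_loss_of_inertia (W : TECQuint) (hW : W.IsTEC) :
    inertia (ser W) ≤ inertia W * (1 - inertia W / 3) ∧
      inertia (par W) ≤ inertia W * (1 - inertia W / 3) := by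
  obtain ⟨hp, hq, hr, hs, ht, hsum⟩ := hW
  rw [inertia_ser, inertia_par]
  exact ⟨childInertia_le hp hq hr hs (by linarith), childInertia_le ht hq hr hs (by linarith)⟩
end
end

section
/- For every tetrahedral erasure channel W, the inertia decreases on average: A(W^s) + A(W^p) ≤ A(W). -/
noncomputable section

open TECQuint

/-!
The inertia of each child is a weighted sum `Σ w² (r - s)²` over the three edge differences,
with weights `p + q, p + r, p + s` for `W^s` and `t + q, t + r, t + s` for `W^p`. All weights
lie in `[0, 1]`, so `w² ≤ w`; since `p + t = 1 - q - r - s`, the linear weights of the two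
children add up to `1 + q - r - s` etc., which gives `A(W)` plus the cubic form
`Σ (q - r - s)(r - s)²`. That form is `-2` times Schur's expression, hence nonpositive.
-/

theorem schur_inequality_of_le {R : Type*} [CommRing R] [LinearOrder R] [IsStrictOrderedRing R]
    {a b c : R} (hc : 0 ≤ c) (hcb : c ≤ b) (hba : b ≤ a) :
    0 ≤ a * (a - b) * (a - c) + b * (b - a) * (b - c) + c * (c - a) * (c - b) := by
  have key : a * (a - b) * (a - c) + b * (b - a) * (b - c) + c * (c - a) * (c - b)
      = (a - b) ^ 2 * (a + b - c) + c * ((a - c) * (b - c)) := by ring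
  rw [key]
  have hac : 0 ≤ a - c := by linarith
  have hbc : 0 ≤ b - c := by linarith
  have habc : 0 ≤ a + b - c := by linarith
  positivity

theorem schur_inequality {R : Type*} [CommRing R] [LinearOrder R] [IsStrictOrderedRing R]
    {a b c : R} (ha : 0 ≤ a) (hb : 0 ≤ b) (hc : 0 ≤ c) :
    0 ≤ a * (a - b) * (a - c) + b * (b - a) * (b - c) + c * (c - a) * (c - b) := by
  rcases le_total a b with _ | _ <;> rcases le_total b c with _ | _ <;>
    rcases le_total a c with _ | _ <;>
    first
    | linarith [schur_inequality_of_le (a := a) (b := b) (c := c) ‹_› ‹_› ‹_›]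
    | linarith [schur_inequality_of_le (a := a) (b := c) (c := b) ‹_› ‹_› ‹_›]
    | linarith [schur_inequality_of_le (a := b) (b := a) (c := c) ‹_› ‹_› ‹_›]
    | linarith [schur_inequality_of_le (a := b) (b := c) (c := a) ‹_› ‹_› ‹_›]
    | linarith [schur_inequality_of_le (a := c) (b := a) (c := b) ‹_› ‹_› ‹_›]
    | linarith [schur_inequality_of_le (a := c) (b := b) (c := a) ‹_› ‹_› ‹_›]

theorem sum_sub_sub_mul_sq_sub_nonpos {R : Type*} [CommRing R] [LinearOrder R]
    [IsStrictOrderedRing R] {a b c : R} (ha : 0 ≤ a) (hb : 0 ≤ b) (hc : 0 ≤ c) :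
    (a - b - c) * (b - c) ^ 2 + (b - c - a) * (c - a) ^ 2 + (c - a - b) * (a - b) ^ 2 ≤ 0 := by
  linear_combination 2 * schur_inequality ha hb hc

namespace TECQuint

theorem inertia_ser_s1 (W : TECQuint) :
    inertia (ser W) = (W.p + W.q) ^ 2 * (W.r - W.s) ^ 2 + (W.p + W.r) ^ 2 * (W.s - W.q) ^ 2
      + (W.p + W.s) ^ 2 * (W.q - W.r) ^ 2 := by
  simp only [inertia, ser]
  ring

theorem inertia_par_s1 (W : TECQuint) :
    inertia (par W) = (W.t + W.q) ^ 2 * (W.r - W.s) ^ 2 + (W.t + W.r) ^ 2 * (W.s - W.q) ^ 2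
      + (W.t + W.s) ^ 2 * (W.q - W.r) ^ 2 := by
  simp only [inertia, par]
  ring

end TECQuint

theorem average_loss_of_inertia (W : TECQuint) (hW : W.IsTEC) :
    inertia (ser W) + inertia (par W) ≤ inertia W := by
  obtain ⟨hp, hq, hr, hs, ht, hsum⟩ := hW
  calc inertia (ser W) + inertia (par W)
      = ((W.p + W.q) ^ 2 + (W.t + W.q) ^ 2) * (W.r - W.s) ^ 2
        + ((W.p + W.r) ^ 2 + (W.t + W.r) ^ 2) * (W.s - W.q) ^ 2
        + ((W.p + W.s) ^ 2 + (W.t + W.s) ^ 2) * (W.q - W.r) ^ 2 := by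
        rw [inertia_ser_s1, inertia_par_s1]; ring
    _ ≤ ((W.p + W.q) + (W.t + W.q)) * (W.r - W.s) ^ 2
        + ((W.p + W.r) + (W.t + W.r)) * (W.s - W.q) ^ 2
        + ((W.p + W.s) + (W.t + W.s)) * (W.q - W.r) ^ 2 := by
        gcongr <;> exact sq_le (by positivity) (by linarith)
    _ = inertia W + ((W.q - W.r - W.s) * (W.r - W.s) ^ 2 + (W.r - W.s - W.q) * (W.s - W.q) ^ 2
        + (W.s - W.q - W.r) * (W.q - W.r) ^ 2) := by
        simp only [inertia]
        linear_combination ((W.r - W.s) ^ 2 + (W.s - W.q) ^ 2 + (W.q - W.r) ^ 2) * hsum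
    _ ≤ inertia W := add_le_of_nonpos_right (sum_sub_sub_mul_sq_sub_nonpos hq hr hs)
end
end

section
/- Let α = 2√7 − 4. If W is a balanced tetrahedral erasure channel with 0 < H(W) < 1 and E(W) ≥ α·H(W)·(1 − H(W)) (i.e. W is edge-heavy), then both children are edge-heavy: E(W^s) ≥ α·H(W^s)·(1 − H(W^s)) and E(W^p) ≥ α·H(W^p)·(1 − H(W^p)). -/
/-!
For a balanced channel `(p, q, q, q, t)` put `u = 1 - H(W) = p + 3q/2` and `v = q`.
Then `E(W^s) = 6v(u - v)` and `1 - H(W^s) = u² - 3v²/4`; the parallel child is the same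
with `u = H(W) = t + 3q/2`. So with `a = 2√7 - 4` both halves reduce to one inequality in
`(u, v)`, to be shown on the segment `a·u(1-u)/3 ≤ v ≤ 2u/3` cut out by edge-heaviness and by
`p ≥ 0` (resp. `t ≥ 0`). Up to a nonnegative quartic term it is a concave quadratic in `v`,
so it suffices to check the two endpoints; at the lower one the check is an exact factorisation,
because `a` is the positive root of `a² + 8a = 12`.
-/

noncomputable section

open TECQuint

lemma quadratic_nonneg_of_mem_Icc {B c d x y v : ℝ} (hB : 0 ≤ B)
    (hx : 0 ≤ -B * x ^ 2 + c * x + d) (hy : 0 ≤ -B * y ^ 2 + c * y + d)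
    (hxv : x ≤ v) (hvy : v ≤ y) : 0 ≤ -B * v ^ 2 + c * v + d := by
  rcases hxv.eq_or_lt with rfl | hlt
  · exact hx
  have interpolation : (y - x) * (-B * v ^ 2 + c * v + d)
      = (y - v) * (-B * x ^ 2 + c * x + d) + (v - x) * (-B * y ^ 2 + c * y + d)
        + B * (v - x) * (y - v) * (y - x) := by ring
  refine nonneg_of_mul_nonneg_right (interpolation ▸ ?_) (sub_pos.2 (hlt.trans_le hvy))
  have hvx := sub_nonneg.2 hxv
  have hyv := sub_nonneg.2 hvy
  exact add_nonneg (add_nonneg (mul_nonneg hyv hx) (mul_nonneg hvx hy))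
    (mul_nonneg (mul_nonneg (mul_nonneg hB hvx) hyv) (sub_nonneg.2 (hxv.trans hvy)))

lemma edge_heavy_step {a u v : ℝ} (ha : a ^ 2 + 8 * a = 12) (ha0 : 0 < a)
    (hu0 : 0 < u) (hu1 : u < 1) (hv : 3 * v ≤ 2 * u) (hheavy : a * (u * (1 - u)) ≤ 3 * v) :
    a * ((u ^ 2 - 3 * v ^ 2 / 4) * (1 - (u ^ 2 - 3 * v ^ 2 / 4))) ≤ 6 * v * (u - v) := by
  have ha32 : a ≤ 3 / 2 := by nlinarith
  have hB : 0 ≤ 6 + 3 * a / 4 * (2 * u ^ 2 - 1) := by nlinarith [mul_nonneg ha0.le (sq_nonneg u)]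
  set B := 6 + 3 * a / 4 * (2 * u ^ 2 - 1)
  set C := a * (u ^ 2 * (1 - u ^ 2))
  have at_lower : 0 ≤ -B * (a * (u * (1 - u)) / 3) ^ 2 + 6 * u * (a * (u * (1 - u)) / 3) - C := by
    have h : -B * (a * (u * (1 - u)) / 3) ^ 2 + 6 * u * (a * (u * (1 - u)) / 3) - C
        = 2 * a * (1 - 2 * a / 3) * (u ^ 2 * ((1 - u) ^ 3 * (1 + u))) := by
      linear_combination (-(a * u ^ 2 * (1 - u) ^ 2 * (2 * u ^ 2 - 1)) / 12) * ha
    rw [h]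
    have : 0 ≤ 1 - u := by linarith
    have : 0 ≤ 1 - 2 * a / 3 := by linarith
    positivity
  have at_upper : 0 ≤ -B * (2 * u / 3) ^ 2 + 6 * u * (2 * u / 3) - C := by
    have h : -B * (2 * u / 3) ^ 2 + 6 * u * (2 * u / 3) - C
        = u ^ 2 / 3 * (4 - 2 * a + a * u ^ 2) := by ring
    rw [h]
    have : 0 ≤ 4 - 2 * a + a * u ^ 2 := by nlinarith [sq_nonneg u]
    positivity
  have hq := quadratic_nonneg_of_mem_Icc (v := v) hB at_lower at_upper (by linarith) (by linarith)
  have quartic_remainder :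
      6 * v * (u - v) - a * ((u ^ 2 - 3 * v ^ 2 / 4) * (1 - (u ^ 2 - 3 * v ^ 2 / 4)))
        = (-B * v ^ 2 + 6 * u * v - C) + 9 * a / 16 * v ^ 4 := by ring
  have : 0 ≤ 9 * a / 16 * v ^ 4 := by positivity
  linarith

namespace TECQuint

variable {W : TECQuint}

lemma edgeMass_of_balanced (hbal : W.Balanced) : edgeMass W = 3 * W.q := by
  obtain ⟨hqr, hrs⟩ := hbal
  simp only [edgeMass, ← hrs, ← hqr]
  ring

lemma entropy_ser_of_balanced (hW : W.IsTEC) (hbal : W.Balanced) :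
    entropy (ser W) = 1 - ((1 - entropy W) ^ 2 - 3 * W.q ^ 2 / 4) := by
  obtain ⟨-, -, -, -, -, hsum⟩ := hW
  obtain ⟨hqr, hrs⟩ := hbal
  simp only [entropy, ser, ← hrs, ← hqr] at hsum ⊢
  linear_combination (W.t - W.p - 1) * hsum

lemma edgeMass_ser_of_balanced (hW : W.IsTEC) (hbal : W.Balanced) :
    edgeMass (ser W) = 6 * W.q * (1 - entropy W - W.q) := by
  obtain ⟨-, -, -, -, -, hsum⟩ := hW
  obtain ⟨hqr, hrs⟩ := hbal
  simp only [entropy, edgeMass, ser, ← hrs, ← hqr] at hsum ⊢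
  linear_combination 6 * W.q * hsum

lemma entropy_par_of_balanced (hbal : W.Balanced) :
    entropy (par W) = entropy W ^ 2 - 3 * W.q ^ 2 / 4 := by
  obtain ⟨hqr, hrs⟩ := hbal
  simp only [entropy, par, ← hrs, ← hqr]
  ring

lemma edgeMass_par_of_balanced (hbal : W.Balanced) :
    edgeMass (par W) = 6 * W.q * (entropy W - W.q) := by
  obtain ⟨hqr, hrs⟩ := hbal
  simp only [entropy, edgeMass, par, ← hrs, ← hqr]
  ring

lemma three_mul_q_le_two_mul_entropy (hW : W.IsTEC) (hbal : W.Balanced) :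
    3 * W.q ≤ 2 * entropy W := by
  obtain ⟨-, -, -, -, ht, -⟩ := hW
  obtain ⟨hqr, hrs⟩ := hbal
  simp only [entropy, ← hrs, ← hqr]
  linarith

lemma three_mul_q_le_two_mul_one_sub_entropy (hW : W.IsTEC) (hbal : W.Balanced) :
    3 * W.q ≤ 2 * (1 - entropy W) := by
  obtain ⟨hp, -, -, -, -, hsum⟩ := hW
  obtain ⟨hqr, hrs⟩ := hbal
  simp only [entropy, ← hrs, ← hqr] at hsum ⊢
  linarith

end TECQuint

theorem trapping_region (W : TECQuint) (hW : W.IsTEC) (hbal : W.Balanced)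
    (h0 : 0 < entropy W) (h1 : entropy W < 1)
    (hheavy : (2 * Real.sqrt 7 - 4) * (entropy W * (1 - entropy W)) ≤ edgeMass W) :
    (2 * Real.sqrt 7 - 4) * (entropy (ser W) * (1 - entropy (ser W))) ≤ edgeMass (ser W) ∧
      (2 * Real.sqrt 7 - 4) * (entropy (par W) * (1 - entropy (par W))) ≤ edgeMass (par W) := by
  have h7 : Real.sqrt 7 ^ 2 = 7 := Real.sq_sqrt (by norm_num)
  have hα : (2 * Real.sqrt 7 - 4) ^ 2 + 8 * (2 * Real.sqrt 7 - 4) = 12 := by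
    linear_combination 4 * h7
  have hα0 : 0 < 2 * Real.sqrt 7 - 4 := by nlinarith [Real.sqrt_nonneg 7]
  rw [edgeMass_of_balanced hbal] at hheavy
  constructor
  · rw [entropy_ser_of_balanced hW hbal, edgeMass_ser_of_balanced hW hbal]
    have := edge_heavy_step hα hα0 (by linarith) (by linarith)
      (three_mul_q_le_two_mul_one_sub_entropy hW hbal) (by linarith)
    linarith
  · rw [entropy_par_of_balanced hbal, edgeMass_par_of_balanced hbal]
    exact edge_heavy_step hα hα0 h0 h1
      (three_mul_q_le_two_mul_entropy hW hbal) hheavy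
end
end

section
/- Let α = 2√7 − 4, fix ε > 0, and set δ = 3ε/8. If W is a balanced tetrahedral erasure channel with 0 < H(W) < 1 and Q(W) ≤ α − ε, then Q(W^s) ≥ Q(W)·(1 + H(W)·δ) and Q(W^p) ≥ Q(W)·(1 + (1 − H(W))·δ). -/
noncomputable section

open TECQuint


lemma quet_Tnn (α u x : ℝ) (hα : α^2 = 12-8*α) (hα1 : 5/4 ≤ α)
    (hu0 : 0 ≤ u) (hu1 : u ≤ 1) (hx0 : 0 ≤ x) (hxα : x ≤ α) :
    0 ≤ 1 - 2*x/3 - 3/8*(1+u)*(α-x) - u^2*x^2/12*(1+3/8*(1-u)*(α-x)) := by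
  have hv : (0:ℝ) ≤ 1-u := by linarith
  have hw : (0:ℝ) ≤ α-x := by linarith
  have hux : u*x ≤ x := by nlinarith
  have hA1 : 0 ≤ x^2*(1-u)*(1+u) := by positivity
  have hA2 : 0 ≤ (α-x)*(α+x-1) := mul_nonneg hw (by linarith)
  have hA3 : 0 ≤ (1-u)*(α-x)*α := mul_nonneg (mul_nonneg hv hw) (by linarith)
  have hA4 : 0 ≤ (1-u)*((α-x)*((α-u*x)*(α+u*x))) :=
    mul_nonneg hv (mul_nonneg hw (mul_nonneg (by linarith) (by nlinarith)))
  nlinarith [hA1, hA2, hA3, hA4, hα]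

lemma quet_core (α u q : ℝ) (hα : α^2 = 12-8*α) (hα1 : 5/4 ≤ α)
    (hu0 : 0 < u) (hu1 : u < 1) (hq : 0 ≤ q) (hg : 3*q ≤ α*u*(1-u)) :
    3/8 * ((1 - u^2 + 3*q^2/4) * (u^2 - 3*q^2/4)) * (α*u*(1-u) - 3*q)
      ≤ u * (2*(u-q)*(1-u)*u - (1 - u^2 + 3*q^2/4) * (u^2 - 3*q^2/4)) := by
  have hDw : 0 < u*(1-u) := mul_pos hu0 (by linarith)
  set x : ℝ := 3*q/(u*(1-u)) with hxdef
  have hx0 : 0 ≤ x := div_nonneg (by linarith) hDw.le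
  have hxα : x ≤ α := by
    rw [hxdef, div_le_iff₀ hDw]; nlinarith [hg]
  have hqe : q = x*(u*(1-u))/3 := by
    rw [hxdef, div_mul_cancel₀ _ hDw.ne']; ring
  have hT := quet_Tnn α u x hα hα1 hu0.le hu1.le hx0 hxα
  have hE1 : 0 ≤ u^3*(1-u)^2 * (1 - 2*x/3 - 3/8*(1+u)*(α-x) - u^2*x^2/12*(1+3/8*(1-u)*(α-x))) :=
    mul_nonneg (by positivity) hT
  have hE2 : 0 ≤ (1 - u^2 + 3*q^2/4) * (3*q^2/4) * (u + 3/8*(α*u*(1-u) - 3*q)) := by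
    apply mul_nonneg (mul_nonneg (by nlinarith) (by positivity))
    nlinarith [hg]
  rw [hqe] at hE2 ⊢
  have hid : u * (2*(u - x*(u*(1-u))/3)*(1-u)*u
        - (1 - u^2 + 3*(x*(u*(1-u))/3)^2/4) * (u^2 - 3*(x*(u*(1-u))/3)^2/4))
      - 3/8 * ((1 - u^2 + 3*(x*(u*(1-u))/3)^2/4) * (u^2 - 3*(x*(u*(1-u))/3)^2/4))
        * (α*u*(1-u) - 3*(x*(u*(1-u))/3))
      = u^3*(1-u)^2 * (1 - 2*x/3 - 3/8*(1+u)*(α-x) - u^2*x^2/12*(1+3/8*(1-u)*(α-x)))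
        + (1 - u^2 + 3*(x*(u*(1-u))/3)^2/4) * (3*(x*(u*(1-u))/3)^2/4)
          * (u + 3/8*(α*u*(1-u) - 3*(x*(u*(1-u))/3))) := by ring
  linarith [hE1, hE2, hid]

set_option maxHeartbeats 1000000 in
lemma quet_half (ε u q E D Qd : ℝ) (hε : 0 < ε) (hu0 : 0 < u) (hu1 : u < 1) (hq : 0 ≤ q)
    (hQd : Qd = (1-u)*u) (hE : E = 3*q*(2*u-2*q))
    (hD : D = (1-u^2+3*q^2/4)*(u^2-3*q^2/4))
    (hQ : 3*q/Qd ≤ (2*Real.sqrt 7 - 4) - ε) :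
    3*q/Qd * (1 + (1-u)*(3*ε/8)) ≤ E/D := by
  subst hQd hE hD
  set α : ℝ := 2*Real.sqrt 7 - 4 with hαdef
  have h7 : Real.sqrt 7^2 = 7 := Real.sq_sqrt (by norm_num)
  have hsn : 0 ≤ Real.sqrt 7 := Real.sqrt_nonneg 7
  have hs1 : 21/8 ≤ Real.sqrt 7 := by nlinarith [h7, hsn]
  have hs2 : Real.sqrt 7 ≤ 27/10 := by nlinarith [h7, hsn]
  have hα : α^2 = 12-8*α := by rw [hαdef]; nlinarith [h7]
  have hα1 : 5/4 ≤ α := by rw [hαdef]; linarith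
  have hα2 : α ≤ 7/5 := by rw [hαdef]; linarith
  have hv : (0:ℝ) < 1-u := by linarith
  have hDw : 0 < (1-u)*u := mul_pos hv hu0
  have hg' : 3*q ≤ ((2*Real.sqrt 7 - 4) - ε)*((1-u)*u) := (div_le_iff₀ hDw).1 hQ
  have hgα : 3*q ≤ α*u*(1-u) := by nlinarith [hg', mul_pos hDw hε]
  have h2 : α*(1-u) ≤ 2 := by nlinarith [mul_nonneg (show (0:ℝ) ≤ α by linarith) hu0.le]
  have h2u : 3*q ≤ 2*u := by nlinarith [mul_le_mul_of_nonneg_right h2 hu0.le]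
  have hd2 : 0 < u^2 - 3*q^2/4 := by
    nlinarith [mul_nonneg (show (0:ℝ) ≤ 2*u - 3*q by linarith)
      (show (0:ℝ) ≤ 2*u + 3*q by linarith), mul_pos hu0 hu0]
  have hd1 : 0 < 1 - u^2 + 3*q^2/4 := by nlinarith [sq_nonneg q]
  have hDs : 0 < (1-u^2+3*q^2/4)*(u^2-3*q^2/4) := mul_pos hd1 hd2
  rw [div_mul_eq_mul_div, div_le_div_iff₀ hDw hDs]
  have hcore := quet_core α u q hα hα1 hu0 hu1 hq hgα
  have heps : ε*(u*(1-u)) ≤ α*u*(1-u) - 3*q := by nlinarith [hg']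
  have hA := mul_le_mul_of_nonneg_left hcore hq
  have hB := mul_le_mul_of_nonneg_left heps
    (mul_nonneg hq hDs.le)
  have hbig : u * (3*q * (1 + (1-u)*(3*ε/8)) * ((1-u^2+3*q^2/4)*(u^2-3*q^2/4)))
      ≤ u * (3*q*(2*u-2*q) * ((1-u)*u)) := by linarith [hA, hB]
  exact le_of_mul_le_mul_left hbig hu0

theorem attraction_toward_trap (ε : ℝ) (hε : 0 < ε)
    (W : TECQuint) (hW : W.IsTEC) (hbal : W.Balanced)
    (h0 : 0 < entropy W) (h1 : entropy W < 1)
    (hQ : quetelet W ≤ (2 * Real.sqrt 7 - 4) - ε) :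
    quetelet W * (1 + entropy W * (3 * ε / 8)) ≤ quetelet (ser W) ∧
      quetelet W * (1 + (1 - entropy W) * (3 * ε / 8)) ≤ quetelet (par W) := by
  obtain ⟨hbq, hbr⟩ := hbal
  have e1 : W.r = W.q := hbq.symm
  have e2 : W.s = W.q := (hbq.trans hbr).symm
  obtain ⟨hp0, hq0, hr0, hs0, ht0, hsum⟩ := hW
  have hp : W.p = 1 - 3*W.q - W.t := by rw [e1, e2] at hsum; linarith
  have hEW : edgeMass W = 3*W.q := by simp only [edgeMass]; rw [e1, e2]; ring
  have hquetW : quetelet W = 3*W.q / (entropy W * (1 - entropy W)) := by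
    simp only [quetelet]; rw [hEW]
  constructor
  · have hE : edgeMass (ser W) = 3*W.q*(2*(1 - entropy W) - 2*W.q) := by
      simp only [edgeMass, ser, entropy]; rw [e1, e2, hp]; ring
    have hD : entropy (ser W) * (1 - entropy (ser W))
        = (1-(1 - entropy W)^2+3*W.q^2/4)*((1 - entropy W)^2-3*W.q^2/4) := by
      simp only [entropy, ser]; rw [e1, e2, hp]; ring
    have hQd : entropy W * (1 - entropy W) = (1-(1 - entropy W))*(1 - entropy W) := by ring
    have hh := quet_half ε (1 - entropy W) W.q (edgeMass (ser W))
      (entropy (ser W) * (1 - entropy (ser W))) (entropy W * (1 - entropy W))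
      hε (by linarith) (by linarith) hq0 hQd hE hD (by rw [← hquetW]; exact hQ)
    calc quetelet W * (1 + entropy W * (3 * ε / 8))
        = 3*W.q / (entropy W * (1 - entropy W)) * (1 + (1-(1 - entropy W))*(3*ε/8)) := by
          rw [hquetW]; ring
      _ ≤ edgeMass (ser W) / (entropy (ser W) * (1 - entropy (ser W))) := hh
      _ = quetelet (ser W) := rfl
  · have hE : edgeMass (par W) = 3*W.q*(2*(entropy W) - 2*W.q) := by
      simp only [edgeMass, par, entropy]; rw [e1, e2]; ring
    have hD : entropy (par W) * (1 - entropy (par W))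
        = (1-(entropy W)^2+3*W.q^2/4)*((entropy W)^2-3*W.q^2/4) := by
      simp only [entropy, par]; rw [e1, e2]; ring
    have hQd : entropy W * (1 - entropy W) = (1-(entropy W))*(entropy W) := by ring
    have hh := quet_half ε (entropy W) W.q (edgeMass (par W))
      (entropy (par W) * (1 - entropy (par W))) (entropy W * (1 - entropy W))
      hε h0 h1 hq0 hQd hE hD (by rw [← hquetW]; exact hQ)
    calc quetelet W * (1 + (1 - entropy W) * (3 * ε / 8))
        = 3*W.q / (entropy W * (1 - entropy W)) * (1 + (1-(entropy W))*(3*ε/8)) := by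
          rw [hquetW]
      _ ≤ edgeMass (par W) / (entropy (par W) * (1 - entropy (par W))) := hh
      _ = quetelet (par W) := rfl
end
end

section
/- If W is a balanced tetrahedral erasure channel with 0 < H(W) < 1 and E(W) ≤ 2·H(W)·(1 − H(W)), then E(W^s) ≤ 2·H(W^s)·(1 − H(W^s)) and E(W^p) ≤ 2·H(W^p)·(1 − H(W^p)); that is, the condition Q(W) ≤ 2 is preserved by both children. -/
/-!
When the total mass is one, `2H(1-H) - E = 2pt - E²/2`, so `Q(W) ≤ 2` is the condition
`E² ≤ 4pt` on the edge mass and the two vertex masses. For a balanced channel with edge masses `q`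
the serial child has `p' = p²`, `E' = 3q(2p + q)`, and `E'² ≤ 4p't'` becomes a polynomial
inequality that follows from `9q² ≤ 4pt`. The parallel child is the serial one with `p` and `t`
exchanged, so the same inequality covers it.
-/

noncomputable section

open TECQuint

namespace TECQuint

variable {W : TECQuint}

theorem two_mul_entropy_mul_one_sub_sub_edgeMass (hsum : W.p + W.q + W.r + W.s + W.t = 1) :
    2 * (entropy W * (1 - entropy W)) - edgeMass W = 2 * W.p * W.t - edgeMass W ^ 2 / 2 := by
  unfold entropy edgeMass
  linear_combination (-2 * W.t) * hsum

theorem edgeMass_le_two_mul_entropy_mul_one_sub_iff (hsum : W.p + W.q + W.r + W.s + W.t = 1) :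
    edgeMass W ≤ 2 * (entropy W * (1 - entropy W)) ↔ edgeMass W ^ 2 ≤ 4 * W.p * W.t := by
  have h := two_mul_entropy_mul_one_sub_sub_edgeMass hsum
  constructor <;> intro _ <;> linarith

theorem ser_sum (W : TECQuint) : (ser W).p + (ser W).q + (ser W).r + (ser W).s + (ser W).t = 1 := by
  unfold ser; ring

theorem par_sum (W : TECQuint) : (par W).p + (par W).q + (par W).r + (par W).s + (par W).t = 1 := by
  unfold par; ring

theorem ser_t (W : TECQuint) : (ser W).t = 1 - ((ser W).p + edgeMass (ser W)) := by
  unfold ser edgeMass; ring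

theorem par_p (W : TECQuint) : (par W).p = 1 - ((par W).t + edgeMass (par W)) := by
  unfold par edgeMass; ring

theorem Balanced.edgeMass_eq (h : W.Balanced) : edgeMass W = 3 * W.q := by
  obtain ⟨hqr, hrs⟩ := h
  unfold edgeMass; rw [← hrs, ← hqr]; ring

theorem Balanced.edgeMass_ser (h : W.Balanced) : edgeMass (ser W) = 3 * W.q * (2 * W.p + W.q) := by
  obtain ⟨hqr, hrs⟩ := h
  unfold edgeMass ser; rw [← hrs, ← hqr]; ring

theorem Balanced.edgeMass_par (h : W.Balanced) : edgeMass (par W) = 3 * W.q * (2 * W.t + W.q) := by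
  obtain ⟨hqr, hrs⟩ := h
  unfold edgeMass par; rw [← hrs, ← hqr]; ring

end TECQuint

/-- After homogenising by `p + 3q + t = 1`, the right side minus the left side is
`(4pt - 9q²)(4pt + 9q² + 8p² + 24pq)/4 + 45q⁴/4 + 6p²q² + 18pq³`. -/
theorem balanced_serial_step {p q t : ℝ} (hp : 0 ≤ p) (hq : 0 ≤ q) (ht : 0 ≤ t)
    (hsum : p + 3 * q + t = 1) (h : (3 * q) ^ 2 ≤ 4 * p * t) :
    (3 * q * (2 * p + q)) ^ 2 ≤ 4 * p ^ 2 * (1 - (p ^ 2 + 3 * q * (2 * p + q))) := by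
  have hd : 0 ≤ 4 * p * t - 9 * q ^ 2 := by linarith
  have hhomog : 1 - (p ^ 2 + 3 * q * (2 * p + q)) = t ^ 2 + 2 * p * t + 6 * q * t + 6 * q ^ 2 := by
    have : (1 : ℝ) = (p + 3 * q + t) ^ 2 := by rw [hsum]; norm_num
    linear_combination this
  rw [hhomog]
  linarith [mul_nonneg hd (by positivity : 0 ≤ 4 * p * t + 9 * q ^ 2 + 8 * p ^ 2 + 24 * p * q),
    pow_nonneg hq 4, mul_nonneg (sq_nonneg p) (sq_nonneg q), mul_nonneg hp (pow_nonneg hq 3)]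

theorem attraction_other_side_general (W : TECQuint) (hW : W.IsTEC) (hbal : W.Balanced)
    (hQ : edgeMass W ≤ 2 * (entropy W * (1 - entropy W))) :
    edgeMass (ser W) ≤ 2 * (entropy (ser W) * (1 - entropy (ser W))) ∧
      edgeMass (par W) ≤ 2 * (entropy (par W) * (1 - entropy (par W))) := by
  obtain ⟨hp, hq, -, -, ht, hsum⟩ := hW
  have hbal_sum : W.p + 3 * W.q + W.t = 1 := by
    rw [← hbal.edgeMass_eq, ← hsum]; unfold edgeMass; ring
  rw [edgeMass_le_two_mul_entropy_mul_one_sub_iff hsum, hbal.edgeMass_eq] at hQ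
  rw [edgeMass_le_two_mul_entropy_mul_one_sub_iff (ser_sum W),
    edgeMass_le_two_mul_entropy_mul_one_sub_iff (par_sum W), ser_t, par_p,
    hbal.edgeMass_ser, hbal.edgeMass_par]
  refine ⟨balanced_serial_step hp hq ht hbal_sum hQ, ?_⟩
  exact (balanced_serial_step ht hq hp (by linarith) (by linarith)).trans_eq (by unfold par; ring)

theorem attraction_other_side (W : TECQuint) (hW : W.IsTEC) (hbal : W.Balanced)
    (h0 : 0 < entropy W) (h1 : entropy W < 1)
    (hQ : edgeMass W ≤ 2 * (entropy W * (1 - entropy W))) :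
    edgeMass (ser W) ≤ 2 * (entropy (ser W) * (1 - entropy (ser W))) ∧
      edgeMass (par W) ≤ 2 * (entropy (par W) * (1 - entropy (par W))) :=
  attraction_other_side_general W hW hbal hQ
end
end
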